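/- arXiv:2102.12872 — 3 statements merged into one kernel-verified Lean document; each statement's English description precedes it below -/
import Mathlib

section
/- Fix a prime q, an integer d ≥ 2, t = ⌈2·log_q d + 2⌉, and d distinct monic irreducible polynomials p_1, …, p_d of degree t over F = F_q. For any canonical box B = ∏_{i=1}^d [a_i/q^{k_i t}, (a_i+1)/q^{k_i t}), the preimage r^{−1}(B) ⊆ F[x] equals A + D·F[x], where D = p_1^{k_1}·p_2^{k_2}⋯p_d^{k_d} and A is the unique polynomial of degree less than t·(k_1+⋯+k_d) with r(A) ∈ B; moreover deg D = t·(k_1+⋯+k_d) = −log_q(vol(B)). -/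
open Finset Polynomial

/-- The value at `1/q` of a polynomial over `ZMod q`, with coefficients lifted to
`{0, 1, …, q−1} ⊆ ℝ`. -/
noncomputable def pev (q : ℕ) (g : Polynomial (ZMod q)) : ℝ :=
  ∑ j ∈ Finset.range (g.natDegree + 1), ((g.coeff j).val : ℝ) / (q : ℝ) ^ j

/-- `r_p(f)`: writing `f = f₀ + f₁ p + f₂ p² + ⋯` in base `p` (each `fᵢ` of degree `< t`,
obtained as `(f /ₘ p^i) %ₘ p`), the real number
`(f₀(1/q) + f₁(1/q) q^(−t) + f₂(1/q) q^(−2t) + ⋯)/q`. -/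
noncomputable def rp (q t : ℕ) (p f : Polynomial (ZMod q)) : ℝ :=
  (∑ i ∈ Finset.range (f.natDegree + 1), pev q ((f /ₘ p ^ i) %ₘ p) / (q : ℝ) ^ (i * t)) / q

/-- The map `r : F[x] → [0,1)^d`, `r(f) = (r_{p 1}(f), …, r_{p d}(f))`. -/
noncomputable def rmap (q t d : ℕ) (p : Fin d → Polynomial (ZMod q))
    (f : Polynomial (ZMod q)) : Fin d → ℝ :=
  fun i => rp q t (p i) f

/-- The canonical box `∏ i, [a i / q^(t * k i), (a i + 1) / q^(t * k i))`. -/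
def canonicalBox (q t d : ℕ) (k a : Fin d → ℕ) : Set (Fin d → ℝ) :=
  Set.univ.pi fun i =>
    Set.Ico ((a i : ℝ) / (q : ℝ) ^ (t * k i)) (((a i : ℝ) + 1) / (q : ℝ) ^ (t * k i))

/-- A basic box in base `q` in `[0,1]^d` of volume `q^(-n)`. -/
def IsBasicBox (q d n : ℕ) (β : Set (Fin d → ℝ)) : Prop :=
  ∃ k a : Fin d → ℕ, (∀ i, a i + 1 ≤ q ^ k i) ∧ (∑ i, k i) = n ∧
    β = Set.univ.pi fun i =>
      Set.Ico ((a i : ℝ) / (q : ℝ) ^ k i) (((a i : ℝ) + 1) / (q : ℝ) ^ k i)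

/-- A canonical box with parameter `t`, as a set. -/
def IsCanonicalBox (q t d : ℕ) (B : Set (Fin d → ℝ)) : Prop :=
  ∃ k a : Fin d → ℕ, (∀ i, a i + 1 ≤ q ^ (t * k i)) ∧ B = canonicalBox q t d k a

/-- `(B, β)` is a good pair: `β` is a basic box of volume `q^(-n)` and `B` is the
smallest canonical box containing `β`. -/
def IsGoodPair (q t d n : ℕ) (B β : Set (Fin d → ℝ)) : Prop :=
  IsBasicBox q d n β ∧ IsCanonicalBox q t d B ∧ β ⊆ B ∧
    ∀ B' : Set (Fin d → ℝ), IsCanonicalBox q t d B' → β ⊆ B' → B ⊆ B'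

/-- The polynomial obtained from `f` by setting the coefficients of
`x^0, x^1, …, x^(c-1)` to zero. -/
noncomputable def eraseLow (q : ℕ) (c : ℕ) (f : Polynomial (ZMod q)) : Polynomial (ZMod q) :=
  ∑ j ∈ f.support.filter (fun j => c ≤ j), Polynomial.monomial j (f.coeff j)

/-!
Write `f = ∑ fᵢ pⁱ` in base `p` and read the coefficients of each digit `fᵢ` as a `t`-digit
base-`q` number `Nᵢ < q^t`. Then `r_p(f) = ∑ Nᵢ / (q^t)^(i+1)`, so the integer part of
`q^(tk) r_p(f)` is the base-`q^t` number with leading digits `N₀, …, N_{k-1}`; the remaining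
digits contribute less than one. Hence `r_p(f) ∈ [a/q^(tk), (a+1)/q^(tk))` pins down exactly
the first `k` base-`p` digits of `f`, i.e. the residue of `f` modulo `p^k`. By the Chinese
remainder theorem `r(f) ∈ B` is a single residue class modulo `D`, and it has exactly one
representative of degree `< deg D`: distinct such polynomials give distinct digit tuples,
and both sets have `q^(deg D)` elements.
-/

open Function

/-- The base-`b` number with digits `D 0, D 1, …, D (k - 1)`, leading digit first. -/
def ofDigitsRev (b : ℕ) (D : ℕ → ℕ) : ℕ → ℕ
  | 0 => 0
  | k + 1 => b * ofDigitsRev b D k + D k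

namespace ofDigitsRev

variable {b : ℕ} {D D' : ℕ → ℕ}

@[simp] lemma zero : ofDigitsRev b D 0 = 0 := rfl

lemma succ (k : ℕ) : ofDigitsRev b D (k + 1) = b * ofDigitsRev b D k + D k := rfl

lemma lt_pow (hD : ∀ i, D i < b) (k : ℕ) : ofDigitsRev b D k < b ^ k := by
  induction k with
  | zero => simp
  | succ k ih =>
    rw [succ, pow_succ']
    nlinarith [hD k]

lemma add (k j : ℕ) :
    ofDigitsRev b D (k + j) =
      b ^ j * ofDigitsRev b D k + ofDigitsRev b (fun i => D (k + i)) j := by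
  induction j with
  | zero => simp
  | succ j ih => rw [← add_assoc, succ, succ, ih]; ring

lemma eq_iff (hD : ∀ i, D i < b) (hD' : ∀ i, D' i < b) {k : ℕ} :
    ofDigitsRev b D k = ofDigitsRev b D' k ↔ ∀ i < k, D i = D' i := by
  induction k with
  | zero => simp
  | succ k ih =>
    have hb : 0 < b := (Nat.zero_le _).trans_lt (hD 0)
    rw [succ, succ, Nat.forall_lt_succ_right, ← ih]
    constructor
    · intro h
      have hlast : D k = D' k := by
        simpa [Nat.mul_add_mod, Nat.mod_eq_of_lt (hD k), Nat.mod_eq_of_lt (hD' k)]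
          using congrArg (· % b) h
      exact ⟨Nat.eq_of_mul_eq_mul_left hb (by omega), hlast⟩
    · rintro ⟨h, hlast⟩
      rw [h, hlast]

lemma pow_mul_sum_div_pow (hb : b ≠ 0) (k : ℕ) :
    (b : ℝ) ^ k * ∑ i ∈ range k, (D i : ℝ) / (b : ℝ) ^ (i + 1) = ofDigitsRev b D k := by
  induction k with
  | zero => simp
  | succ k ih =>
    rw [sum_range_succ, succ, mul_add, pow_succ, mul_comm _ (b : ℝ), mul_assoc, ih]
    field_simp
    push_cast
    ring

lemma floor_pow_mul_sum_div_pow (hD : ∀ i, D i < b) {k m : ℕ} (hkm : k ≤ m) :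
    ⌊(b : ℝ) ^ k * ∑ i ∈ range m, (D i : ℝ) / (b : ℝ) ^ (i + 1)⌋₊ = ofDigitsRev b D k := by
  have hb : b ≠ 0 := ((Nat.zero_le _).trans_lt (hD 0)).ne'
  obtain ⟨j, rfl⟩ := Nat.exists_eq_add_of_le hkm
  have hscale : (b : ℝ) ^ k * ∑ i ∈ range (k + j), (D i : ℝ) / (b : ℝ) ^ (i + 1)
      = (ofDigitsRev b D (k + j) : ℝ) / ((b ^ j : ℕ) : ℝ) := by
    rw [← pow_mul_sum_div_pow hb, pow_add]
    field_simp
    push_cast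
    ring
  rw [hscale, Nat.floor_div_eq_div, add, Nat.mul_add_div (pow_pos (Nat.pos_of_ne_zero hb) j),
    Nat.div_eq_of_lt (lt_pow (fun i => hD _) j), add_zero]

end ofDigitsRev

section BaseDigit

variable {R : Type*} [CommRing R]

noncomputable def baseDigit (p f : R[X]) (i : ℕ) : R[X] := (f /ₘ p ^ i) %ₘ p

variable {p f g : R[X]}

lemma baseDigit_eq_zero_of_natDegree_lt [Nontrivial R] (hp : p.Monic) {i : ℕ}
    (h : f.natDegree < i) : baseDigit p f i = 0 := by
  by_cases hp0 : p.natDegree = 0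
  · rw [baseDigit, hp.natDegree_eq_zero.mp hp0, modByMonic_one]
  have hlt : f.natDegree < i * p.natDegree := by nlinarith [Nat.pos_of_ne_zero hp0]
  have hdiv : f /ₘ p ^ i = 0 := by
    rw [divByMonic_eq_zero_iff (hp.pow i), degree_eq_natDegree (hp.pow i).ne_zero,
      hp.natDegree_pow]
    exact degree_le_natDegree.trans_lt (by exact_mod_cast hlt)
  rw [baseDigit, hdiv, zero_modByMonic]

lemma modByMonic_eq_iff_dvd_sub (hp : p.Monic) : f %ₘ p = g %ₘ p ↔ p ∣ f - g := by
  rw [← sub_eq_zero, ← sub_modByMonic, modByMonic_eq_zero_iff_dvd hp]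

lemma dvd_sub_pow_succ_iff [IsDomain R] (hp : p.Monic) {k : ℕ} (hk : p ^ k ∣ f - g) :
    p ^ (k + 1) ∣ f - g ↔ baseDigit p f k = baseDigit p g k := by
  have hmod : f %ₘ p ^ k = g %ₘ p ^ k := (modByMonic_eq_iff_dvd_sub (hp.pow k)).mpr hk
  have hsplit : f - g = p ^ k * (f /ₘ p ^ k - g /ₘ p ^ k) := by
    linear_combination modByMonic_add_div g (p ^ k) - modByMonic_add_div f (p ^ k) + hmod
  rw [baseDigit, baseDigit, modByMonic_eq_iff_dvd_sub hp, hsplit, pow_succ,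
    mul_dvd_mul_iff_left (pow_ne_zero k hp.ne_zero)]

lemma forall_baseDigit_eq_iff_dvd [IsDomain R] (hp : p.Monic) {k : ℕ} :
    (∀ i < k, baseDigit p f i = baseDigit p g i) ↔ p ^ k ∣ f - g := by
  induction k with
  | zero => simp
  | succ k ih =>
    rw [Nat.forall_lt_succ_right, ih]
    constructor
    · rintro ⟨hk, hdigit⟩
      exact (dvd_sub_pow_succ_iff hp hk).mpr hdigit
    · intro h
      have hk := (pow_dvd_pow p k.le_succ).trans h
      exact ⟨hk, (dvd_sub_pow_succ_iff hp hk).mp h⟩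

end BaseDigit

section ZModDigits

variable {q t : ℕ}

noncomputable def basicToNat (q t : ℕ) (g : (ZMod q)[X]) : ℕ :=
  ofDigitsRev q (fun j => (g.coeff j).val) t

/-- `r_p(f)` lies in `[c / q^(tk), (c + 1) / q^(tk))` for `c = rpIndex q t p f k`. -/
noncomputable def rpIndex (q t : ℕ) (p f : (ZMod q)[X]) (k : ℕ) : ℕ :=
  ofDigitsRev (q ^ t) (fun i => basicToNat q t (baseDigit p f i)) k

variable {p f g : (ZMod q)[X]}

lemma basicToNat_lt [NeZero q] : basicToNat q t g < q ^ t :=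
  ofDigitsRev.lt_pow (fun _ => ZMod.val_lt _) t

lemma basicToNat_eq_iff [NeZero q] (hg : g.degree < t) (hf : f.degree < t) :
    basicToNat q t g = basicToNat q t f ↔ g = f := by
  rw [basicToNat, basicToNat,
    ofDigitsRev.eq_iff (fun _ => ZMod.val_lt _) (fun _ => ZMod.val_lt _)]
  refine ⟨fun h => ext fun j => ?_, by rintro rfl _ _; rfl⟩
  rcases lt_or_ge j t with hj | hj
  · exact ZMod.val_injective q (h j hj)
  · have htj : (t : WithBot ℕ) ≤ j := by exact_mod_cast hj
    rw [coeff_eq_zero_of_degree_lt (hg.trans_le htj),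
      coeff_eq_zero_of_degree_lt (hf.trans_le htj)]

lemma pev_eq_sum (hg : g.degree < t) :
    pev q g = ∑ j ∈ range t, ((g.coeff j).val : ℝ) / (q : ℝ) ^ j := by
  rcases eq_or_ne g 0 with rfl | hg0
  · simp [pev]
  refine sum_subset (range_subset_range.mpr ((natDegree_lt_iff_degree_lt hg0).mpr hg))
    fun j _ hj => ?_
  rw [coeff_eq_zero_of_natDegree_lt (by simpa using hj), ZMod.val_zero, Nat.cast_zero, zero_div]

lemma pev_div_eq [NeZero q] (hg : g.degree < t) :
    pev q g / q = basicToNat q t g / (q : ℝ) ^ t := by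
  have hq : (q : ℝ) ≠ 0 := Nat.cast_ne_zero.mpr (NeZero.ne q)
  rw [eq_div_iff (pow_ne_zero t hq), mul_comm, basicToNat,
    ← ofDigitsRev.pow_mul_sum_div_pow (NeZero.ne q), pev_eq_sum hg, sum_div]
  simp_rw [pow_succ, div_div]

lemma baseDigit_degree_lt [Fact (1 < q)] (hp : p.Monic) (hpt : p.natDegree = t) (i : ℕ) :
    (baseDigit p f i).degree < t := by
  rw [← hpt, ← degree_eq_natDegree hp.ne_zero]
  exact degree_modByMonic_lt _ hp

lemma rp_eq_sum [Fact (1 < q)] (hp : p.Monic) (hpt : p.natDegree = t) {m : ℕ}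
    (hm : f.natDegree < m) :
    rp q t p f =
      ∑ i ∈ range m, (basicToNat q t (baseDigit p f i) : ℝ) / ((q : ℝ) ^ t) ^ (i + 1) := by
  rw [rp, sum_div, sum_subset (range_subset_range.mpr hm)]
  · refine sum_congr rfl fun i _ => ?_
    change pev q (baseDigit p f i) / _ / _ = _
    rw [div_right_comm, pev_div_eq (baseDigit_degree_lt hp hpt i)]
    ring
  · intro i _ hi
    have hdigit : (f /ₘ p ^ i) %ₘ p = 0 :=
      baseDigit_eq_zero_of_natDegree_lt hp (by simpa using hi)
    simp [hdigit, pev]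

lemma rp_nonneg [Fact (1 < q)] (hp : p.Monic) (hpt : p.natDegree = t) : 0 ≤ rp q t p f := by
  rw [rp_eq_sum hp hpt f.natDegree.lt_succ_self]
  positivity

lemma floor_pow_mul_rp [Fact (1 < q)] (hp : p.Monic) (hpt : p.natDegree = t) (k : ℕ) :
    ⌊(q : ℝ) ^ (t * k) * rp q t p f⌋₊ = rpIndex q t p f k := by
  have h := ofDigitsRev.floor_pow_mul_sum_div_pow
    (D := fun i => basicToNat q t (baseDigit p f i)) (fun _ => basicToNat_lt)
    (le_max_right (f.natDegree + 1) k)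
  push_cast at h
  rwa [rp_eq_sum hp hpt (Nat.lt_of_succ_le (le_max_left _ _)), pow_mul]

lemma rp_mem_Ico_iff [Fact (1 < q)] (hp : p.Monic) (hpt : p.natDegree = t) (k c : ℕ) :
    rp q t p f ∈ Set.Ico ((c : ℝ) / (q : ℝ) ^ (t * k)) (((c : ℝ) + 1) / (q : ℝ) ^ (t * k)) ↔
      rpIndex q t p f k = c := by
  have hQ : (0 : ℝ) < (q : ℝ) ^ (t * k) := by
    have := (Fact.out : 1 < q); positivity
  rw [← floor_pow_mul_rp hp hpt, Nat.floor_eq_iff (mul_nonneg hQ.le (rp_nonneg hp hpt)),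
    Set.mem_Ico, div_le_iff₀' hQ, lt_div_iff₀' hQ]

lemma rpIndex_lt [NeZero q] (k : ℕ) : rpIndex q t p f k < q ^ (t * k) := by
  rw [pow_mul]
  exact ofDigitsRev.lt_pow (fun _ => basicToNat_lt) k

lemma rpIndex_eq_iff_dvd [Fact q.Prime] (hp : p.Monic) (hpt : p.natDegree = t) (k : ℕ) :
    rpIndex q t p f k = rpIndex q t p g k ↔ p ^ k ∣ f - g := by
  rw [rpIndex, rpIndex, ofDigitsRev.eq_iff (fun _ => basicToNat_lt) (fun _ => basicToNat_lt),
    ← forall_baseDigit_eq_iff_dvd hp]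
  exact forall₂_congr fun i _ =>
    basicToNat_eq_iff (baseDigit_degree_lt hp hpt i) (baseDigit_degree_lt hp hpt i)

end ZModDigits

section ProductOfPrimePowers

variable {K : Type*} [Field K] {ι : Type*} {p : ι → K[X]}

lemma pairwise_isCoprime_of_monic_irreducible (hmonic : ∀ i, (p i).Monic)
    (hirr : ∀ i, Irreducible (p i)) (hinj : Injective p) :
    Pairwise (IsCoprime on p) := by
  intro i j hij
  rw [onFun, (hirr i).coprime_iff_not_dvd]
  exact fun hdvd => hij (hinj (eq_of_monic_of_associated (hmonic i) (hmonic j)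
    ((hirr i).associated_of_dvd (hirr j) hdvd)))

lemma natDegree_prod_pow [Fintype ι] {t : ℕ} (hmonic : ∀ i, (p i).Monic)
    (hdeg : ∀ i, (p i).natDegree = t) (k : ι → ℕ) :
    (∏ i, p i ^ k i).natDegree = t * ∑ i, k i := by
  rw [natDegree_prod_of_monic _ _ fun i _ => (hmonic i).pow (k i), mul_sum]
  exact sum_congr rfl fun i _ => by rw [(hmonic i).natDegree_pow, hdeg, mul_comm]

end ProductOfPrimePowers

section CanonicalBox

variable {q t d : ℕ} {p : Fin d → (ZMod q)[X]}

lemma rmap_mem_canonicalBox_iff [Fact (1 < q)] (hmonic : ∀ i, (p i).Monic)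
    (hdeg : ∀ i, (p i).natDegree = t) (k a : Fin d → ℕ) (f : (ZMod q)[X]) :
    rmap q t d p f ∈ canonicalBox q t d k a ↔ ∀ i, rpIndex q t (p i) f (k i) = a i := by
  rw [canonicalBox, Set.mem_univ_pi]
  exact forall_congr' fun i => rp_mem_Ico_iff (hmonic i) (hdeg i) (k i) (a i)

variable [Fact q.Prime]

lemma forall_rpIndex_eq_iff_dvd (hmonic : ∀ i, (p i).Monic) (hdeg : ∀ i, (p i).natDegree = t)
    (hcop : Pairwise (IsCoprime on p)) (k : Fin d → ℕ) {f g : (ZMod q)[X]} :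
    (∀ i, rpIndex q t (p i) f (k i) = rpIndex q t (p i) g (k i)) ↔
      (∏ i, p i ^ k i) ∣ f - g := by
  simp only [rpIndex_eq_iff_dvd (hmonic _) (hdeg _)]
  exact ⟨Fintype.prod_dvd_of_coprime fun i j hij => (hcop hij).pow,
    fun h i => (dvd_prod_of_mem (fun i => p i ^ k i) (mem_univ i)).trans h⟩

lemma eq_of_degree_lt_of_forall_rpIndex_eq (hmonic : ∀ i, (p i).Monic)
    (hdeg : ∀ i, (p i).natDegree = t) (hcop : Pairwise (IsCoprime on p)) (k : Fin d → ℕ)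
    {f g : (ZMod q)[X]} (hf : f.degree < ↑(t * ∑ i, k i)) (hg : g.degree < ↑(t * ∑ i, k i))
    (h : ∀ i, rpIndex q t (p i) f (k i) = rpIndex q t (p i) g (k i)) : f = g := by
  have hD : (∏ i, p i ^ k i).degree = ↑(t * ∑ i, k i) := by
    rw [degree_eq_natDegree (monic_prod_of_monic _ _ fun i _ => (hmonic i).pow _).ne_zero,
      natDegree_prod_pow hmonic hdeg]
  refine sub_eq_zero.mp (eq_zero_of_dvd_of_degree_lt
    ((forall_rpIndex_eq_iff_dvd hmonic hdeg hcop k).mp h) ?_)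
  rw [hD]
  exact (degree_sub_le f g).trans_lt (max_lt hf hg)

lemma exists_degree_lt_forall_rpIndex_eq (hmonic : ∀ i, (p i).Monic)
    (hdeg : ∀ i, (p i).natDegree = t) (hcop : Pairwise (IsCoprime on p)) (k a : Fin d → ℕ)
    (ha : ∀ i, a i + 1 ≤ q ^ (t * k i)) :
    ∃ A : (ZMod q)[X],
      A.degree < ↑(t * ∑ i, k i) ∧ ∀ i, rpIndex q t (p i) A (k i) = a i := by
  set n := t * ∑ i, k i
  let Φ : degreeLT (ZMod q) n → ∀ i, Fin (q ^ (t * k i)) :=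
    fun A i => ⟨rpIndex q t (p i) A (k i), rpIndex_lt (k i)⟩
  have hΦ : Injective Φ := fun A B h => Subtype.ext <|
    eq_of_degree_lt_of_forall_rpIndex_eq hmonic hdeg hcop k (mem_degreeLT.mp A.2)
      (mem_degreeLT.mp B.2) fun i => congrArg Fin.val (congrFun h i)
  have hcard : Nat.card (∀ i, Fin (q ^ (t * k i))) ≤ Nat.card (degreeLT (ZMod q) n) := by
    rw [Nat.card_pi, Nat.card_congr (degreeLTEquiv (ZMod q) n).toEquiv, Nat.card_fun,
      Nat.card_zmod]
    simp [prod_pow_eq_pow_sum, n, mul_sum]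
  obtain ⟨A, hA⟩ := (hΦ.bijective_of_nat_card_le hcard).2 fun i => ⟨a i, ha i⟩
  exact ⟨A, mem_degreeLT.mp A.2, fun i => congrArg Fin.val (congrFun hA i)⟩

lemma setOf_rmap_mem_canonicalBox (hmonic : ∀ i, (p i).Monic)
    (hdeg : ∀ i, (p i).natDegree = t) (hcop : Pairwise (IsCoprime on p)) (k a : Fin d → ℕ)
    {A : (ZMod q)[X]} (hA : rmap q t d p A ∈ canonicalBox q t d k a) :
    {f | rmap q t d p f ∈ canonicalBox q t d k a} =
      {f | ∃ g, f = A + (∏ i, p i ^ k i) * g} := by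
  ext f
  rw [rmap_mem_canonicalBox_iff hmonic hdeg] at hA
  simp only [Set.mem_ofPred_eq, rmap_mem_canonicalBox_iff hmonic hdeg, ← hA,
    forall_rpIndex_eq_iff_dvd hmonic hdeg hcop]
  exact ⟨fun ⟨g, hg⟩ => ⟨g, by rw [← hg]; ring⟩, fun ⟨g, hg⟩ => ⟨g, by rw [hg]; ring⟩⟩

end CanonicalBox

theorem stmt10_general (q d t : ℕ) [Fact q.Prime]
    (p : Fin d → Polynomial (ZMod q))
    (hmonic : ∀ i, (p i).Monic) (hirr : ∀ i, Irreducible (p i))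
    (hdeg : ∀ i, (p i).natDegree = t) (hinj : Function.Injective p)
    (k a : Fin d → ℕ) (ha : ∀ i, a i + 1 ≤ q ^ (t * k i)) :
    (∏ i, p i ^ k i).natDegree = t * ∑ i, k i ∧
    (∃! A : Polynomial (ZMod q),
      A.degree < ((t * ∑ i, k i : ℕ) : WithBot ℕ) ∧
        rmap q t d p A ∈ canonicalBox q t d k a) ∧
    (∀ A : Polynomial (ZMod q),
      A.degree < ((t * ∑ i, k i : ℕ) : WithBot ℕ) →
      rmap q t d p A ∈ canonicalBox q t d k a →
      {f : Polynomial (ZMod q) | rmap q t d p f ∈ canonicalBox q t d k a}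
        = {f : Polynomial (ZMod q) | ∃ g, f = A + (∏ i, p i ^ k i) * g}) := by
  have hcop := pairwise_isCoprime_of_monic_irreducible hmonic hirr hinj
  have hbox := rmap_mem_canonicalBox_iff hmonic hdeg k a
  obtain ⟨A₀, hA₀deg, hA₀⟩ := exists_degree_lt_forall_rpIndex_eq hmonic hdeg hcop k a ha
  refine ⟨natDegree_prod_pow hmonic hdeg k, ⟨A₀, ⟨hA₀deg, (hbox A₀).mpr hA₀⟩, ?_⟩,
    fun A _ hA => setOf_rmap_mem_canonicalBox hmonic hdeg hcop k a hA⟩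
  rintro A ⟨hAdeg, hA⟩
  refine eq_of_degree_lt_of_forall_rpIndex_eq hmonic hdeg hcop k hAdeg hA₀deg fun i => ?_
  rw [(hbox A).mp hA i, hA₀ i]

/-- for a canonical box `B`, `r⁻¹(B) = A + D·F[x]` with
`D = ∏ i, p i ^ k i`, `A` the unique polynomial of degree `< t(k₁+⋯+k_d)` with `r(A) ∈ B`;
moreover `deg D = t(k₁+⋯+k_d)`. -/
theorem stmt10 (q d t : ℕ) [Fact q.Prime] (hd : 2 ≤ d)
    (ht : t = ⌈2 * Real.log d / Real.log q + 2⌉₊)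
    (p : Fin d → Polynomial (ZMod q))
    (hmonic : ∀ i, (p i).Monic) (hirr : ∀ i, Irreducible (p i))
    (hdeg : ∀ i, (p i).natDegree = t) (hinj : Function.Injective p)
    (k a : Fin d → ℕ) (ha : ∀ i, a i + 1 ≤ q ^ (t * k i)) :
    (∏ i, p i ^ k i).natDegree = t * ∑ i, k i ∧
    (∃! A : Polynomial (ZMod q),
      A.degree < ((t * ∑ i, k i : ℕ) : WithBot ℕ) ∧
        rmap q t d p A ∈ canonicalBox q t d k a) ∧
    (∀ A : Polynomial (ZMod q),
      A.degree < ((t * ∑ i, k i : ℕ) : WithBot ℕ) →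
      rmap q t d p A ∈ canonicalBox q t d k a →
      {f : Polynomial (ZMod q) | rmap q t d p f ∈ canonicalBox q t d k a}
        = {f : Polynomial (ZMod q) | ∃ g, f = A + (∏ i, p i ^ k i) * g}) :=
  stmt10_general q d t p hmonic hirr hdeg hinj k a ha
end

section
/- Fix a prime q, an integer d ≥ 2, t = ⌈2·log_q d + 2⌉, d distinct monic irreducible polynomials p_1, …, p_d of degree t over F = F_q, and a positive integer n with n ≥ 3dt. The number of distinct types T(B), as B ranges over all canonical boxes with q^{−n} ≤ vol(B) ≤ q^{−n+dt−1}, is at most q^{4dt}. -/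
open Finset Polynomial

/-
Ā(B) keeps only the coefficients of `A(B)` in degrees `[n - dt, n)`, since `deg A(B) < t ∑ kᵢ ≤ n`,
and D̄(B) only those in degrees `[n - 3dt + 1, n]`, since `deg D(B) = t ∑ kᵢ ≤ n`. A type is
therefore determined by `dt + 3dt` coefficients in `F_q`, which leaves at most `q^(4dt)` choices.
-/

namespace Polynomial

lemma natDegree_prod_pow_le {ι R : Type*} [Fintype ι] [CommSemiring R]
    (p : ι → R[X]) (k : ι → ℕ) {t : ℕ} (hp : ∀ i, (p i).natDegree ≤ t) :
    (∏ i, p i ^ k i).natDegree ≤ t * ∑ i, k i := by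
  calc (∏ i, p i ^ k i).natDegree
      ≤ ∑ i, (p i ^ k i).natDegree := natDegree_prod_le _ _
    _ ≤ ∑ i, t * k i := sum_le_sum fun i _ =>
        natDegree_pow_le.trans (by rw [mul_comm]; exact Nat.mul_le_mul_right _ (hp i))
    _ = t * ∑ i, k i := (mul_sum _ _ _).symm

def supportedIn (R : Type*) [Semiring R] (s : Finset ℕ) : Set R[X] :=
  {f | f.support ⊆ s}

section supportedIn

variable {R : Type*} [Semiring R]

lemma injOn_restrict_coeff_supportedIn (s : Finset ℕ) :
    Set.InjOn (fun f : R[X] => fun j : s => f.coeff j) (supportedIn R s) := by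
  intro f hf g hg hfg
  ext j
  by_cases hj : j ∈ s
  · exact congrFun hfg ⟨j, hj⟩
  · rw [notMem_support_iff.mp fun h => hj (hf h), notMem_support_iff.mp fun h => hj (hg h)]

lemma finite_supportedIn [Finite R] (s : Finset ℕ) : (supportedIn R s).Finite :=
  Set.Finite.of_injOn (Set.mapsTo_univ _ _) (injOn_restrict_coeff_supportedIn s) Set.finite_univ

lemma ncard_supportedIn_le [Fintype R] (s : Finset ℕ) :
    (supportedIn R s).ncard ≤ Fintype.card R ^ s.card := by
  calc (supportedIn R s).ncard
      ≤ (Set.univ : Set (s → R)).ncard :=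
        Set.ncard_le_ncard_of_injOn _ (fun _ _ => Set.mem_univ _)
          (injOn_restrict_coeff_supportedIn s) Set.finite_univ
    _ = Fintype.card R ^ s.card := by
        rw [Set.ncard_univ, Nat.card_eq_fintype_card, Fintype.card_fun, Fintype.card_coe]

lemma ncard_supportedIn_Ico_le [Fintype R] (c m : ℕ) :
    (supportedIn R (Ico c (c + m))).ncard ≤ Fintype.card R ^ m := by
  simpa only [Nat.card_Ico, Nat.add_sub_cancel_left] using ncard_supportedIn_le (Ico c (c + m))

end supportedIn

end Polynomial

@[simp]
lemma coeff_eraseLow (q c : ℕ) (f : Polynomial (ZMod q)) (j : ℕ) :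
    (eraseLow q c f).coeff j = if c ≤ j then f.coeff j else 0 := by
  simp only [eraseLow, finsetSum_coeff, coeff_monomial, sum_ite_eq', mem_filter,
    mem_support_iff]
  split_ifs <;> simp_all

lemma eraseLow_mem_supportedIn (q c m : ℕ) {f : Polynomial (ZMod q)}
    (hf : f.degree < ↑(c + m)) : eraseLow q c f ∈ supportedIn (ZMod q) (Ico c (c + m)) := by
  intro j hj
  rw [mem_support_iff, coeff_eraseLow] at hj
  split_ifs at hj with hcj
  · refine mem_Ico.mpr ⟨hcj, lt_of_not_ge fun hle => hj ?_⟩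
    exact coeff_eq_zero_of_degree_lt (hf.trans_le (by exact_mod_cast hle))
  · exact (hj rfl).elim

theorem stmt12_general (q d t n : ℕ) [Fact q.Prime]
    (p : Fin d → Polynomial (ZMod q))
    (hdeg : ∀ i, (p i).natDegree = t)
    (𝓣 : Set (Polynomial (ZMod q) × Polynomial (ZMod q)))
    (h𝓣 : 𝓣 = {T | ∃ (k a : Fin d → ℕ) (A : Polynomial (ZMod q)),
      (∀ i, a i + 1 ≤ q ^ (t * k i)) ∧
      n - d * t + 1 ≤ t * ∑ i, k i ∧ t * ∑ i, k i ≤ n ∧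
      A.degree < ((t * ∑ i, k i : ℕ) : WithBot ℕ) ∧
      rmap q t d p A ∈ canonicalBox q t d k a ∧
      T = (eraseLow q (n - d * t) A, eraseLow q (n - 3 * d * t + 1) (∏ i, p i ^ k i))}) :
    𝓣.Finite ∧ 𝓣.ncard ≤ q ^ (4 * d * t) := by
  set S := supportedIn (ZMod q) (Ico (n - d * t) (n - d * t + d * t)) ×ˢ
    supportedIn (ZMod q) (Ico (n - 3 * d * t + 1) (n - 3 * d * t + 1 + 3 * d * t))
  have h𝓣S : 𝓣 ⊆ S := by
    rw [h𝓣]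
    rintro _ ⟨k, a, A, -, -, hkn, hA, -, rfl⟩
    have hD := natDegree_prod_pow_le p k fun i => (hdeg i).le
    refine ⟨eraseLow_mem_supportedIn q _ _ (hA.trans_le ?_),
      eraseLow_mem_supportedIn q _ _ (degree_le_natDegree.trans_lt ?_)⟩ <;>
    · norm_cast
      omega
  have hS : S.ncard ≤ q ^ (4 * d * t) := by
    calc S.ncard = _ * _ := Set.ncard_prod
      _ ≤ q ^ (d * t) * q ^ (3 * d * t) := by
          simpa only [ZMod.card] using
            Nat.mul_le_mul (ncard_supportedIn_Ico_le (R := ZMod q) _ _)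
              (ncard_supportedIn_Ico_le (R := ZMod q) _ _)
      _ = q ^ (4 * d * t) := by ring
  have hSfin : S.Finite := (finite_supportedIn _).prod (finite_supportedIn _)
  exact ⟨hSfin.subset h𝓣S, (Set.ncard_le_ncard h𝓣S hSfin).trans hS⟩

/-- Claim 2: the number of types `T(B) = (Ā(B), D̄(B))`, over canonical
boxes `B` with `q^(-n) ≤ vol(B) ≤ q^(-n+dt-1)`, is at most `q^(4dt)`. -/
theorem stmt12 (q d t n : ℕ) [Fact q.Prime] (hd : 2 ≤ d) (hn : 0 < n)
    (ht : t = ⌈2 * Real.log d / Real.log q + 2⌉₊)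
    (hnt : 3 * d * t ≤ n)
    (p : Fin d → Polynomial (ZMod q))
    (hmonic : ∀ i, (p i).Monic) (hirr : ∀ i, Irreducible (p i))
    (hdeg : ∀ i, (p i).natDegree = t) (hinj : Function.Injective p)
    (𝓣 : Set (Polynomial (ZMod q) × Polynomial (ZMod q)))
    (h𝓣 : 𝓣 = {T | ∃ (k a : Fin d → ℕ) (A : Polynomial (ZMod q)),
      (∀ i, a i + 1 ≤ q ^ (t * k i)) ∧
      n - d * t + 1 ≤ t * ∑ i, k i ∧ t * ∑ i, k i ≤ n ∧
      A.degree < ((t * ∑ i, k i : ℕ) : WithBot ℕ) ∧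
      rmap q t d p A ∈ canonicalBox q t d k a ∧
      T = (eraseLow q (n - d * t) A, eraseLow q (n - 3 * d * t + 1) (∏ i, p i ^ k i))}) :
    𝓣.Finite ∧ 𝓣.ncard ≤ q ^ (4 * d * t) :=
  stmt12_general q d t n p hdeg 𝓣 h𝓣
end

section
/- Let q ≥ 2, d ≥ 2, n, k be integers with 1 ≤ k ≤ d/2 and n ≥ 2k, let 0 < ε ≤ 1/2, and let P ⊆ [0,1]^d be an (m, ε)-almost net in base q of size q^n·m. Let 𝓑 = [0, 1/q^{n−2k}) × [0,1)^{d−1}, let S = P ∩ 𝓑 = {v^1, …, v^τ}, and let U be the C(d,k)-by-τ complex matrix with rows indexed by k-element subsets J of {1,…,d} and entries U_{J,ℓ} = e_q(∑_{j∈J} X_j(v^ℓ)), and set A = (1/τ)·U·U*. Then every diagonal entry of A equals 1, and every off-diagonal entry of A has absolute value at most 2ε. -/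
open Finset

/-- `P ⊆ [0,1]^d` is an `(m, ε)`-almost net in base `q`, of size `q ^ n * m`. -/
def IsAlmostNet (q d n : ℕ) (m ε : ℝ) (P : Finset (Fin d → ℝ)) : Prop :=
  (∀ x ∈ P, ∀ i, x i ∈ Set.Icc (0 : ℝ) 1) ∧
  (P.card : ℝ) = (q : ℝ) ^ n * m ∧
  ∀ β : Set (Fin d → ℝ), IsBasicBox q d n β →
    (1 - ε) * m ≤ (((P : Set (Fin d → ℝ)) ∩ β).ncard : ℝ) ∧
      (((P : Set (Fin d → ℝ)) ∩ β).ncard : ℝ) ≤ (1 + ε) * m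
/-- The `j`-th base-`q` digit of `x ∈ [0,1)`: if `x = (0.x₁x₂x₃…)_q` then
`digit q x j = x_j` (for `j ≥ 1`). -/
noncomputable def qdigit (q : ℕ) (x : ℝ) (j : ℕ) : ℕ :=
  (⌊x * (q : ℝ) ^ j⌋).toNat % q

/-- The box `𝓑 = [0, 1/q^(n−2k)) × [0,1)^(d−1)`. -/
def Bset (q d n k : ℕ) : Set (Fin d → ℝ) :=
  Set.univ.pi fun i =>
    if (i : ℕ) = 0 then Set.Ico (0 : ℝ) (1 / (q : ℝ) ^ (n - 2 * k)) else Set.Ico (0 : ℝ) 1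

/-- For `v ∈ 𝓑`: `X₁(v)` is the `(n−2k+1)`-st base-`q` digit of the first coordinate
(its first possibly nonzero digit), and `X_ℓ(v)` is the first digit of `v_ℓ` for `ℓ ≥ 2`. -/
noncomputable def Xfun (q d n k : ℕ) (v : Fin d → ℝ) (i : Fin d) : ℕ :=
  if (i : ℕ) = 0 then qdigit q (v i) (n - 2 * k + 1) else qdigit q (v i) 1

/-! The entries of `A` are averages over `S = P ∩ 𝓑` of `e_q(∑_{j ∈ J₁} X_j - ∑_{j ∈ J₂} X_j)`.
Prescribing the digits `X_j` for `j` in a set `T` of at most `2k` coordinates cuts out of `𝓑` a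
basic box of volume `q^{-(n-2k+|T|)}`, a disjoint union of `q^{2k-|T|}` basic boxes of volume
`q^{-n}`; so every digit pattern on `T` is carried by `(1 ± ε) m q^{2k-|T|}` points of `S`.
For `T = J₁ ∪ J₂` the character sums to zero over all digit patterns on `T` (it is nontrivial in a
coordinate of `J₁ \ J₂`), so only the deviations of the `q^{|T|}` pattern counts survive and
`|A_{J₁J₂}| ≤ ε m q^{2k} / τ`. For `T = ∅` the count gives `τ ≥ (1 - ε) m q^{2k} ≥ m q^{2k} / 2`. -/

theorem floor_mul_natCast_eq_iff {𝕜 : Type*} [Field 𝕜] [LinearOrder 𝕜] [IsOrderedRing 𝕜]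
    [FloorRing 𝕜] {y : 𝕜} {N : ℕ} (hN : 0 < N) {a b : ℤ} (hb₀ : 0 ≤ b) (hbN : b < N) :
    ⌊y * N⌋ = a * N + b ↔ ⌊y⌋ = a ∧ ⌊y * N⌋ % N = b := by
  have hN' : (N : 𝕜) ≠ 0 := by positivity
  rw [show ⌊y⌋ = ⌊y * N⌋ / N by rw [← Int.floor_div_natCast, mul_div_cancel_right₀ _ hN'],
    Int.ediv_emod_unique (by exact_mod_cast hN)]
  constructor
  · intro h
    exact ⟨by rw [h]; ring, hb₀, hbN⟩
  · rintro ⟨h, -, -⟩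
    rw [← h]; ring

theorem mem_Ico_div_iff_floor_mul_eq {x : ℝ} {N : ℝ} (hN : 0 < N) (a : ℤ) :
    x ∈ Set.Ico (a / N) ((a + 1) / N) ↔ ⌊x * N⌋ = a := by
  rw [Set.mem_Ico, div_le_iff₀ hN, lt_div_iff₀ hN, Int.floor_eq_iff]

theorem ZMod.natCast_eq_iff_eq_val {q x : ℕ} [NeZero q] (hx : x < q) (c : ZMod q) :
    (x : ZMod q) = c ↔ x = c.val :=
  ⟨fun h => by rw [← h, ZMod.val_natCast_of_lt hx], fun h => by rw [h, ZMod.natCast_zmod_val]⟩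

theorem Set.ncard_coe_inter_eq_card_filter {α : Type*} (P : Finset α) (B : Set α)
    [DecidablePred (· ∈ B)] : ((P : Set α) ∩ B).ncard = #{w ∈ P | w ∈ B} := by
  rw [← Set.ncard_coe_finset, Finset.coe_filter]
  rfl

theorem Finset.card_filter_comp_eq_ncard {ι α : Type*} [Fintype ι] {v : ι → α}
    (hv : Function.Injective v) (p : α → Prop) [DecidablePred p] :
    #{ℓ | p (v ℓ)} = (Set.range v ∩ {w | p w}).ncard := by
  rw [← Set.ncard_coe_finset, ← Set.ncard_image_of_injective _ hv]
  congr 1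
  ext w
  simp only [Finset.coe_filter, Finset.mem_univ, true_and, Set.mem_image, Set.mem_ofPred_eq,
    Set.mem_inter_iff, Set.mem_range]
  constructor
  · rintro ⟨ℓ, hp, rfl⟩
    exact ⟨⟨ℓ, rfl⟩, hp⟩
  · rintro ⟨⟨ℓ, rfl⟩, hp⟩
    exact ⟨ℓ, hp, rfl⟩

theorem norm_sum_comp_le_of_abs_card_fiber_sub_le {ι α : Type*} [Fintype ι] [Fintype α]
    [DecidableEq α] (g : ι → α) {χ : α → ℂ} (hχ : ∑ a, χ a = 0) (hχ1 : ∀ a, ‖χ a‖ ≤ 1)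
    {M δ : ℝ} (hg : ∀ a, |(#{ℓ | g ℓ = a} : ℝ) - M| ≤ δ) :
    ‖∑ ℓ, χ (g ℓ)‖ ≤ Fintype.card α * δ := by
  have hfiber : ∑ ℓ, χ (g ℓ) = ∑ a, (((#{ℓ | g ℓ = a} : ℝ) - M : ℝ) : ℂ) * χ a := by
    rw [← Finset.sum_fiberwise Finset.univ g (fun ℓ => χ (g ℓ))]
    push_cast
    simp only [sub_mul, Finset.sum_sub_distrib, ← Finset.mul_sum, hχ, mul_zero, sub_zero]
    refine Finset.sum_congr rfl fun a _ => ?_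
    rw [Finset.sum_congr rfl fun ℓ hℓ => by rw [(Finset.mem_filter.1 hℓ).2], Finset.sum_const,
      nsmul_eq_mul]
  calc ‖∑ ℓ, χ (g ℓ)‖ ≤ ∑ a, ‖(((#{ℓ | g ℓ = a} : ℝ) - M : ℝ) : ℂ) * χ a‖ :=
        hfiber ▸ norm_sum_le _ _
    _ ≤ ∑ _a : α, δ := Finset.sum_le_sum fun a _ => by
        rw [norm_mul, Complex.norm_real, Real.norm_eq_abs]
        exact (mul_le_of_le_one_right (abs_nonneg _) (hχ1 a)).trans (hg a)
    _ = Fintype.card α * δ := by rw [Finset.sum_const, nsmul_eq_mul, Finset.card_univ]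

theorem AddChar.sum_apply_sum_zsmul_eq_zero {R ι : Type*} [AddCommGroup R] [Fintype R]
    [Fintype ι] [DecidableEq ι] {ψ : AddChar R ℂ} (hψ : ψ ≠ 1) (s : ι → ℤ) {j₀ : ι}
    (hj₀ : s j₀ = 1) : ∑ c : ι → R, ψ (∑ j, s j • c j) = 0 := by
  let L : (ι → R) →+ R :=
    { toFun := fun c => ∑ j, s j • c j
      map_zero' := by simp
      map_add' := fun c c' => by simp [smul_add, Finset.sum_add_distrib] }
  refine AddChar.sum_eq_zero_of_ne_one (ψ := ψ.compAddMonoidHom L) ?_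
  obtain ⟨r, hr⟩ := AddChar.ne_one_iff.1 hψ
  refine AddChar.ne_one_iff.2 ⟨Pi.single j₀ r, ?_⟩
  simpa [L, Pi.single_apply, hj₀] using hr

theorem ZMod.stdAddChar_ne_one {q : ℕ} [NeZero q] (hq : 1 < q) :
    (ZMod.stdAddChar : AddChar (ZMod q) ℂ) ≠ 1 := by
  have : Fact (1 < q) := ⟨hq⟩
  refine AddChar.ne_one_iff.2 ⟨1, fun h => one_ne_zero (ZMod.injective_stdAddChar (N := q) ?_)⟩
  rw [h, AddChar.map_zero_eq_one]

theorem Matrix.mul_conjTranspose_apply_eq_sum_addChar {ι κ G : Type*} [Fintype κ]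
    [AddCommGroup G] [Finite G] (ψ : AddChar G ℂ) {U : Matrix ι κ ℂ} (x : ι → κ → G)
    (hU : ∀ i l, U i l = ψ (x i l)) (i j : ι) :
    (U * U.conjTranspose) i j = ∑ l, ψ (x i l - x j l) := by
  simp only [Matrix.mul_apply, Matrix.conjTranspose_apply, hU, Complex.star_def,
    ← AddChar.map_neg_eq_conj, ← AddChar.map_add_eq_mul, sub_eq_add_neg]

theorem Finset.sum_coe_sort_indicator_sub_zsmul {ι R : Type*} [DecidableEq ι] [AddCommGroup R]
    {T J₁ J₂ : Finset ι} (h₁ : J₁ ⊆ T) (h₂ : J₂ ⊆ T) (x : ι → R) :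
    ∑ j : T, ((if (j : ι) ∈ J₁ then 1 else 0) - (if (j : ι) ∈ J₂ then 1 else 0) : ℤ) • x j =
      ∑ j ∈ J₁, x j - ∑ j ∈ J₂, x j := by
  rw [Finset.sum_coe_sort T
    fun j => ((if j ∈ J₁ then 1 else 0) - (if j ∈ J₂ then 1 else 0) : ℤ) • x j]
  simp only [sub_smul, ite_smul, one_smul, zero_smul, Finset.sum_sub_distrib, Finset.sum_ite_mem,
    Finset.inter_eq_right.2 h₁, Finset.inter_eq_right.2 h₂]

def basicBox {d : ℕ} (q : ℕ) (K a : Fin d → ℕ) : Set (Fin d → ℝ) :=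
  {w | ∀ i, ⌊w i * (q : ℝ) ^ K i⌋ = a i}

section BasicBox

variable {q d : ℕ}

theorem basicBox_eq_pi (hq : 0 < q) (K a : Fin d → ℕ) :
    basicBox q K a = Set.univ.pi fun i =>
      Set.Ico ((a i : ℝ) / (q : ℝ) ^ K i) (((a i : ℝ) + 1) / (q : ℝ) ^ K i) := by
  ext w
  simp only [basicBox, Set.mem_ofPred_eq, Set.mem_univ_pi]
  refine forall_congr' fun i => ?_
  exact_mod_cast (mem_Ico_div_iff_floor_mul_eq (by positivity) (a i : ℤ)).symm

theorem isBasicBox_basicBox (hq : 0 < q) {n : ℕ} {K a : Fin d → ℕ} (ha : ∀ i, a i < q ^ K i)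
    (hK : ∑ i, K i = n) : IsBasicBox q d n (basicBox q K a) :=
  ⟨K, a, ha, hK, basicBox_eq_pi hq K a⟩

theorem mem_basicBox_update_iff (hq : 0 < q) (K a : Fin d → ℕ) (i : Fin d) (s : ℕ) {b : ℕ}
    (hb : b < q ^ s) (w : Fin d → ℝ) :
    w ∈ basicBox q (Function.update K i (K i + s)) (Function.update a i (a i * q ^ s + b)) ↔
      w ∈ basicBox q K a ∧ ⌊w i * (q : ℝ) ^ (K i + s)⌋ % (q ^ s : ℕ) = b := by
  have hdigit : ⌊w i * (q : ℝ) ^ (K i + s)⌋ = a i * (q ^ s : ℕ) + b ↔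
      ⌊w i * (q : ℝ) ^ K i⌋ = a i ∧ ⌊w i * (q : ℝ) ^ (K i + s)⌋ % (q ^ s : ℕ) = b := by
    have h := floor_mul_natCast_eq_iff (y := w i * (q : ℝ) ^ K i) (N := q ^ s) (a := a i)
      (by positivity) (Int.natCast_nonneg b) (by exact_mod_cast hb)
    push_cast at h ⊢
    rwa [pow_add, ← mul_assoc]
  simp only [basicBox, Set.mem_ofPred_eq]
  constructor
  · intro h
    have hi := h i
    simp only [Function.update_self] at hi
    push_cast at hi
    refine ⟨fun j => ?_, (hdigit.1 hi).2⟩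
    rcases eq_or_ne j i with rfl | hj
    · exact (hdigit.1 hi).1
    · simpa [Function.update_of_ne hj] using h j
  · rintro ⟨h, hi⟩ j
    rcases eq_or_ne j i with rfl | hj
    · simp only [Function.update_self]
      push_cast
      exact hdigit.2 ⟨h j, hi⟩
    · simpa [Function.update_of_ne hj] using h j

theorem ncard_inter_basicBox_eq_sum (hq : 0 < q) (P : Finset (Fin d → ℝ)) (K a : Fin d → ℕ)
    (i : Fin d) (s : ℕ) :
    ((P : Set (Fin d → ℝ)) ∩ basicBox q K a).ncard = ∑ b ∈ range (q ^ s),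
      ((P : Set (Fin d → ℝ)) ∩ basicBox q (Function.update K i (K i + s))
        (Function.update a i (a i * q ^ s + b))).ncard := by
  classical
  set digit : (Fin d → ℝ) → ℕ := fun w => (⌊w i * (q : ℝ) ^ (K i + s)⌋ % (q ^ s : ℕ)).toNat
  have hdigit : ∀ w, (digit w : ℤ) = ⌊w i * (q : ℝ) ^ (K i + s)⌋ % (q ^ s : ℕ) := fun w =>
    Int.toNat_of_nonneg (Int.emod_nonneg _ (by positivity))
  have hmaps : Set.MapsTo digit (↑{w ∈ P | w ∈ basicBox q K a}) ↑(range (q ^ s)) := by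
    intro w _
    have := Int.emod_lt_of_pos ⌊w i * (q : ℝ) ^ (K i + s)⌋
      (by positivity : (0 : ℤ) < (q ^ s : ℕ))
    rw [← hdigit] at this
    exact Finset.mem_range.2 (by exact_mod_cast this)
  simp only [Set.ncard_coe_inter_eq_card_filter]
  rw [Finset.card_eq_sum_card_fiberwise hmaps]
  refine Finset.sum_congr rfl fun b hb => congrArg _ ?_
  rw [Finset.filter_filter]
  refine Finset.filter_congr fun w _ => ?_
  rw [mem_basicBox_update_iff hq K a i s (Finset.mem_range.1 hb), ← hdigit, Nat.cast_inj]

theorem IsAlmostNet.ncard_inter_basicBox_mem_Icc {n : ℕ} [NeZero d] {m ε : ℝ}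
    {P : Finset (Fin d → ℝ)} (hq : 0 < q) (hP : IsAlmostNet q d n m ε P) {K a : Fin d → ℕ}
    {s : ℕ} (ha : ∀ i, a i < q ^ K i) (hK : ∑ i, K i + s = n) :
    (1 - ε) * m * q ^ s ≤ ((P : Set (Fin d → ℝ)) ∩ basicBox q K a).ncard ∧
      ((P : Set (Fin d → ℝ)) ∩ basicBox q K a).ncard ≤ (1 + ε) * m * q ^ s := by
  set K' := Function.update K 0 (K 0 + s)
  set a' : ℕ → Fin d → ℕ := fun b => Function.update a 0 (a 0 * q ^ s + b)
  have hK' : ∑ i, K' i = n := by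
    rw [Finset.sum_update_of_mem (Finset.mem_univ 0), ← hK,
      ← Finset.add_sum_erase _ K (Finset.mem_univ 0), Finset.sdiff_singleton_eq_erase]
    ring
  have ha' : ∀ b < q ^ s, ∀ i, a' b i < q ^ K' i := by
    intro b hb i
    rcases eq_or_ne i 0 with rfl | hi
    · simp only [a', K', Function.update_self, pow_add]
      nlinarith [ha 0]
    · simpa [a', K', Function.update_of_ne hi] using ha i
  have hbox := fun b (hb : b ∈ range (q ^ s)) =>
    hP.2.2 _ (isBasicBox_basicBox hq (ha' b (Finset.mem_range.1 hb)) hK')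
  have hsum : ∀ c : ℝ, ∑ _b ∈ range (q ^ s), c = c * q ^ s := fun c => by
    rw [Finset.sum_const, Finset.card_range, nsmul_eq_mul, mul_comm]; push_cast; ring
  rw [ncard_inter_basicBox_eq_sum hq P K a 0 s]
  push_cast
  constructor
  · calc (1 - ε) * m * q ^ s = ∑ _b ∈ range (q ^ s), (1 - ε) * m := (hsum _).symm
      _ ≤ _ := Finset.sum_le_sum fun b hb => (hbox b hb).1
  · calc _ ≤ ∑ _b ∈ range (q ^ s), (1 + ε) * m := Finset.sum_le_sum fun b hb => (hbox b hb).2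
      _ = (1 + ε) * m * q ^ s := hsum _

end BasicBox

theorem qdigit_lt {q : ℕ} (hq : 0 < q) (x : ℝ) (j : ℕ) : qdigit q x j < q :=
  Nat.mod_lt _ hq

theorem floor_eq_zero_and_qdigit_eq_iff {q : ℕ} (hq : 0 < q) (x : ℝ) (K : ℕ) {b : ℕ}
    (hb : b < q) :
    ⌊x * (q : ℝ) ^ K⌋ = 0 ∧ qdigit q x (K + 1) = b ↔ ⌊x * (q : ℝ) ^ (K + 1)⌋ = b := by
  have hsplit := floor_mul_natCast_eq_iff (y := x * (q : ℝ) ^ K) (N := q) (a := 0) hq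
    (Int.natCast_nonneg b) (by exact_mod_cast hb)
  rw [zero_mul, zero_add, mul_assoc, ← pow_succ] at hsplit
  have hqdigit : 0 ≤ ⌊x * (q : ℝ) ^ (K + 1)⌋ →
      (qdigit q x (K + 1) = b ↔ ⌊x * (q : ℝ) ^ (K + 1)⌋ % q = b) := fun h0 => by
    rw [qdigit, ← Nat.cast_inj (R := ℤ), Int.natCast_mod, Int.toNat_of_nonneg h0]
  constructor
  · rintro ⟨h0, hdig⟩
    have hx : 0 ≤ x := by
      have := Int.floor_eq_zero_iff.1 h0
      exact nonneg_of_mul_nonneg_left this.1 (by positivity)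
    have hnn : 0 ≤ ⌊x * (q : ℝ) ^ (K + 1)⌋ := Int.floor_nonneg.2 (by positivity)
    exact hsplit.2 ⟨h0, (hqdigit hnn).1 hdig⟩
  · intro h
    exact ⟨(hsplit.1 h).1, (hqdigit (h ▸ Int.natCast_nonneg b)).2 (hsplit.1 h).2⟩

def fixedDigits {d : ℕ} (n k : ℕ) : Fin d → ℕ := fun i => if (i : ℕ) = 0 then n - 2 * k else 0

noncomputable def digitsOn (q d n k : ℕ) (T : Finset (Fin d)) (w : Fin d → ℝ) : T → ZMod q :=
  fun j => Xfun q d n k w j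

section DigitsInB

variable {q d n k : ℕ}

theorem sum_fixedDigits [NeZero d] : ∑ i, fixedDigits (d := d) n k i = n - 2 * k := by
  rw [Finset.sum_eq_single (0 : Fin d)]
  · simp [fixedDigits]
  · intro i _ hi
    exact if_neg (fun h => hi (Fin.ext (by rw [h, Fin.val_zero])))
  · simp

theorem Xfun_eq_qdigit (w : Fin d → ℝ) (i : Fin d) :
    Xfun q d n k w i = qdigit q (w i) (fixedDigits n k i + 1) := by
  unfold Xfun fixedDigits
  split_ifs <;> rfl

theorem Bset_eq_basicBox (hq : 0 < q) : Bset q d n k = basicBox q (fixedDigits n k) 0 := by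
  rw [basicBox_eq_pi hq, Bset]
  refine congrArg _ (funext fun i => ?_)
  unfold fixedDigits
  split_ifs <;> simp

theorem mem_Bset_and_digitsOn_eq_iff [NeZero q] (T : Finset (Fin d)) (c : T → ZMod q)
    (w : Fin d → ℝ) :
    w ∈ Bset q d n k ∧ digitsOn q d n k T w = c ↔
      w ∈ basicBox q (fun i => fixedDigits n k i + if i ∈ T then 1 else 0)
        (fun i => if h : i ∈ T then (c ⟨i, h⟩).val else 0) := by
  have hq : 0 < q := Nat.pos_of_neZero q
  rw [Bset_eq_basicBox hq, funext_iff, Subtype.forall]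
  unfold digitsOn
  simp only [basicBox, Set.mem_ofPred_eq, ← forall_and]
  refine forall_congr' fun i => ?_
  by_cases hi : i ∈ T
  · simp only [hi, if_true, dite_true, forall_true_left, Pi.zero_apply, Nat.cast_zero,
      Xfun_eq_qdigit, ZMod.natCast_eq_iff_eq_val (qdigit_lt hq _ _)]
    exact floor_eq_zero_and_qdigit_eq_iff hq _ _ (c ⟨i, hi⟩).val_lt
  · simp [hi]

end DigitsInB

section PointsInB

variable {q d n k m : ℕ} {ε : ℝ} {P : Finset (Fin d → ℝ)} {τ : ℕ} {v : Fin τ → (Fin d → ℝ)}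

theorem card_digitsOn_eq_mem_Icc [NeZero q] [NeZero d] (hn : 2 * k ≤ n)
    (hP : IsAlmostNet q d n (m : ℝ) ε P) (hvinj : Function.Injective v)
    (hvrange : Set.range v = (P : Set (Fin d → ℝ)) ∩ Bset q d n k) {T : Finset (Fin d)}
    (hT : #T ≤ 2 * k) (c : T → ZMod q) :
    (1 - ε) * m * q ^ (2 * k - #T) ≤
        #{ℓ | digitsOn q d n k T (v ℓ) = c} ∧
      (#{ℓ | digitsOn q d n k T (v ℓ) = c} : ℝ) ≤
        (1 + ε) * m * q ^ (2 * k - #T) := by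
  have hq : 0 < q := Nat.pos_of_neZero q
  have ha : ∀ i, (if h : i ∈ T then (c ⟨i, h⟩).val else 0) <
      q ^ (fixedDigits n k i + if i ∈ T then 1 else 0) := by
    intro i
    by_cases hi : i ∈ T
    · simpa [hi] using (c ⟨i, hi⟩).val_lt.trans_le (Nat.le_self_pow (by omega) q)
    · simp [hi, hq]
  have hK : ∑ i, (fixedDigits n k i + if i ∈ T then 1 else 0) + (2 * k - #T) = n := by
    rw [Finset.sum_add_distrib, sum_fixedDigits, Finset.sum_boole, Finset.filter_mem_eq_inter,
      Finset.univ_inter]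
    push_cast
    omega
  rw [Finset.card_filter_comp_eq_ncard hvinj
    (digitsOn q d n k T · = c), hvrange, Set.inter_assoc,
    show Bset q d n k ∩ {w | digitsOn q d n k T w = c} = _ from
      Set.ext fun w => mem_Bset_and_digitsOn_eq_iff T c w]
  exact hP.ncard_inter_basicBox_mem_Icc hq ha hK

theorem le_card_points [NeZero q] [NeZero d] (hn : 2 * k ≤ n)
    (hP : IsAlmostNet q d n (m : ℝ) ε P) (hvinj : Function.Injective v)
    (hvrange : Set.range v = (P : Set (Fin d → ℝ)) ∩ Bset q d n k) :
    (1 - ε) * m * q ^ (2 * k) ≤ τ := by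
  have h := (card_digitsOn_eq_mem_Icc hn hP hvinj hvrange (T := ∅) (by simp) isEmptyElim).1
  rwa [Finset.filter_true_of_mem fun _ _ => Subsingleton.elim _ _, Finset.card_univ,
    Fintype.card_fin, Finset.card_empty, Nat.sub_zero] at h

theorem norm_sum_stdAddChar_le [NeZero q] [NeZero d] (hq : 2 ≤ q) (hn : 2 * k ≤ n)
    (hP : IsAlmostNet q d n (m : ℝ) ε P) (hvinj : Function.Injective v)
    (hvrange : Set.range v = (P : Set (Fin d → ℝ)) ∩ Bset q d n k) {J₁ J₂ : Finset (Fin d)}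
    (h₁ : #J₁ = k) (h₂ : #J₂ = k) (hne : J₁ ≠ J₂) :
    ‖∑ ℓ, ZMod.stdAddChar (∑ j ∈ J₁, (Xfun q d n k (v ℓ) j : ZMod q) -
        ∑ j ∈ J₂, (Xfun q d n k (v ℓ) j : ZMod q))‖ ≤ ε * m * q ^ (2 * k) := by
  obtain ⟨j₀, hj₀₁, hj₀₂⟩ : ∃ j₀ ∈ J₁, j₀ ∉ J₂ := by
    by_contra! h
    exact hne (Finset.eq_of_subset_of_card_le h (by rw [h₁, h₂]))
  set T := J₁ ∪ J₂
  have hT : #T ≤ 2 * k := (Finset.card_union_le _ _).trans (by rw [h₁, h₂]; omega)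
  set s : T → ℤ := fun j =>
    (if (j : Fin d) ∈ J₁ then 1 else 0) - (if (j : Fin d) ∈ J₂ then 1 else 0)
  set M : ℝ := m * q ^ (2 * k - #T)
  have hterm : ∀ ℓ, ∑ j ∈ J₁, (Xfun q d n k (v ℓ) j : ZMod q) -
      ∑ j ∈ J₂, (Xfun q d n k (v ℓ) j : ZMod q) =
        ∑ j : T, s j • digitsOn q d n k T (v ℓ) j := fun ℓ =>
    (Finset.sum_coe_sort_indicator_sub_zsmul Finset.subset_union_left Finset.subset_union_right
      _).symm
  have hfiber : ∀ c : T → ZMod q,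
      |(#{ℓ | digitsOn q d n k T (v ℓ) = c} : ℝ) - M| ≤ ε * M := by
    intro c
    obtain ⟨hlo, hhi⟩ := card_digitsOn_eq_mem_Icc hn hP hvinj hvrange hT c
    rw [abs_sub_le_iff]
    constructor <;> linarith
  simp_rw [hterm]
  refine (norm_sum_comp_le_of_abs_card_fiber_sub_le _
    (AddChar.sum_apply_sum_zsmul_eq_zero (ZMod.stdAddChar_ne_one hq) s
      (j₀ := ⟨j₀, Finset.mem_union_left _ hj₀₁⟩) (by simp [s, hj₀₁, hj₀₂]))
    (fun _ => (AddChar.norm_apply _ _).le) hfiber).trans_eq ?_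
  have hpow : (q : ℝ) ^ #T * q ^ (2 * k - #T) = q ^ (2 * k) := by
    rw [← pow_add, Nat.add_sub_cancel' hT]
  rw [Fintype.card_fun, ZMod.card, Fintype.card_coe, ← hpow]
  push_cast
  ring

end PointsInB

theorem stmt17_general (q d n k m : ℕ) (ε : ℝ) (P : Finset (Fin d → ℝ))
    (hq : 2 ≤ q) (hd : 2 ≤ d) (hn : 2 * k ≤ n)
    (hε0 : 0 < ε) (hε : ε ≤ 1 / 2) (hm : 0 < m)
    (hP : IsAlmostNet q d n (m : ℝ) ε P)
    (τ : ℕ) (v : Fin τ → (Fin d → ℝ))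
    (hvinj : Function.Injective v)
    (hvrange : Set.range v = (P : Set (Fin d → ℝ)) ∩ Bset q d n k)
    (U : Matrix {J : Finset (Fin d) // J.card = k} (Fin τ) ℂ)
    (hU : ∀ (J : {J : Finset (Fin d) // J.card = k}) (ℓ : Fin τ),
      U J ℓ = Complex.exp (2 * Real.pi * Complex.I *
        ((∑ j ∈ J.1, Xfun q d n k (v ℓ) j : ℕ) : ℂ) / q))
    (A : Matrix {J : Finset (Fin d) // J.card = k} {J : Finset (Fin d) // J.card = k} ℂ)
    (hA : A = ((τ : ℂ))⁻¹ • (U * U.conjTranspose)) :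
    (∀ J, A J J = 1) ∧
    (∀ J₁ J₂, J₁ ≠ J₂ → ‖A J₁ J₂‖ ≤ 2 * ε) := by
  have : NeZero q := ⟨by omega⟩
  have : NeZero d := ⟨by omega⟩
  have hUψ : ∀ J ℓ, U J ℓ = ZMod.stdAddChar (∑ j ∈ J.1, (Xfun q d n k (v ℓ) j : ZMod q)) :=
    fun J ℓ => by rw [hU, ← Nat.cast_sum, ZMod.stdAddChar_apply, ZMod.toCircle_natCast]
  have hentry : ∀ J₁ J₂, A J₁ J₂ = (τ : ℂ)⁻¹ * ∑ ℓ, ZMod.stdAddChar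
      (∑ j ∈ J₁.1, (Xfun q d n k (v ℓ) j : ZMod q) -
        ∑ j ∈ J₂.1, (Xfun q d n k (v ℓ) j : ZMod q)) := fun J₁ J₂ => by
    rw [hA, Matrix.smul_apply, smul_eq_mul, Matrix.mul_conjTranspose_apply_eq_sum_addChar _ _ hUψ]
  have hτ := le_card_points hn hP hvinj hvrange
  have hτpos : (0 : ℝ) < τ := by
    have : (0 : ℝ) < m := by exact_mod_cast hm
    have : 0 < 1 - ε := by linarith
    exact lt_of_lt_of_le (by positivity) hτ
  refine ⟨fun J => ?_, fun J₁ J₂ hne => ?_⟩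
  · simp only [hentry, sub_self, AddChar.map_zero_eq_one, Finset.sum_const, Finset.card_univ,
      Fintype.card_fin, nsmul_eq_mul, mul_one]
    exact inv_mul_cancel₀ (by exact_mod_cast hτpos.ne')
  · rw [hentry, norm_mul, norm_inv, Complex.norm_natCast, inv_mul_le_iff₀ hτpos]
    refine (norm_sum_stdAddChar_le hq hn hP hvinj hvrange J₁.2 J₂.2
      (Subtype.coe_injective.ne hne)).trans ?_
    have : (0 : ℝ) ≤ m * q ^ (2 * k) := by positivity
    nlinarith [mul_le_mul_of_nonneg_left hτ (by linarith : (0 : ℝ) ≤ 2 * ε),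
      mul_nonneg (mul_nonneg hε0.le this) (by linarith : (0 : ℝ) ≤ 1 - 2 * ε)]

/-- Claim 6: the Gram-type matrix `A = (1/τ) U U*` built from the points of
`P ∩ 𝓑` has all diagonal entries `1` and all off-diagonal entries of absolute value at
most `2ε`. -/
theorem stmt17 (q d n k m : ℕ) (ε : ℝ) (P : Finset (Fin d → ℝ))
    (hq : 2 ≤ q) (hd : 2 ≤ d) (hk1 : 1 ≤ k) (hk2 : 2 * k ≤ d) (hn : 2 * k ≤ n)
    (hε0 : 0 < ε) (hε : ε ≤ 1 / 2) (hm : 0 < m)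
    (hP : IsAlmostNet q d n (m : ℝ) ε P)
    (τ : ℕ) (v : Fin τ → (Fin d → ℝ))
    (hvinj : Function.Injective v)
    (hvrange : Set.range v = (P : Set (Fin d → ℝ)) ∩ Bset q d n k)
    (U : Matrix {J : Finset (Fin d) // J.card = k} (Fin τ) ℂ)
    (hU : ∀ (J : {J : Finset (Fin d) // J.card = k}) (ℓ : Fin τ),
      U J ℓ = Complex.exp (2 * Real.pi * Complex.I *
        ((∑ j ∈ J.1, Xfun q d n k (v ℓ) j : ℕ) : ℂ) / q))
    (A : Matrix {J : Finset (Fin d) // J.card = k} {J : Finset (Fin d) // J.card = k} ℂ)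
    (hA : A = ((τ : ℂ))⁻¹ • (U * U.conjTranspose)) :
    (∀ J, A J J = 1) ∧
    (∀ J₁ J₂, J₁ ≠ J₂ → ‖A J₁ J₂‖ ≤ 2 * ε) :=
  stmt17_general q d n k m ε P hq hd hn hε0 hε hm hP τ v hvinj hvrange U hU A hA
end
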